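/- arXiv:2011.05517 — 2 statements merged into one kernel-verified Lean document; each statement's English description precedes it below -/
import Mathlib

section
/- Let N_1 ≥ N_2 ≥ 1 be dyadic integers and τ ∈ ℕ. For α ∈ [1/2, 1], define Λ_{N_1,N_2,τ} = {(n_1, n_2) ∈ ℕ² : N_1 ≤ n_1 < 2N_1, N_2 ≤ n_2 < 2N_2, |z_{n_1}^{2α} + z_{n_2}^{2α} − τ| ≤ 1/2}, where z_n = π(n − 1/2). Then #Λ_{N_1,N_2,τ} ≤ C·N_2 for a constant C independent of N_1, N_2, τ. -/
/-- Gap lemma: for `1 ≤ m < n` and exponent `s = 2α ≥ 1`, the values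
`(π(n-1/2))^s` are separated by more than 1. -/
lemma gap_lemma (α : ℝ) (hα1 : 1/2 ≤ α) (m n : ℕ) (hm : 1 ≤ m) (hmn : m < n) :
    (Real.pi*((m:ℝ) - 1/2)) ^ (2*α) + 1 < (Real.pi*((n:ℝ) - 1/2)) ^ (2*α) := by
  set a : ℝ := Real.pi*((m:ℝ) - 1/2) with ha
  set b : ℝ := Real.pi*((n:ℝ) - 1/2) with hb
  have hpi : (3:ℝ) < Real.pi := by linarith [Real.pi_gt_d6]
  have hm1 : (1:ℝ) ≤ (m:ℝ) := by exact_mod_cast hm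
  have hn1 : (m:ℝ) + 1 ≤ (n:ℝ) := by exact_mod_cast hmn
  have ha1 : (1:ℝ) ≤ a := by rw [ha]; nlinarith
  have ha0 : (0:ℝ) < a := by linarith
  have hba : a + 3 < b := by rw [ha, hb]; nlinarith
  have hb0 : (0:ℝ) < b := by linarith
  have hs : (1:ℝ) ≤ 2*α := by linarith
  -- a ^ (2α - 1) ≥ 1
  have h1 : (1:ℝ) ≤ a ^ (2*α - 1) := by
    have := Real.rpow_le_rpow_of_exponent_le ha1 (show (0:ℝ) ≤ 2*α - 1 by linarith)
    simpa using this
  -- b ^ (2α) ≥ a^(2α-1) * b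
  have hdiv : (1:ℝ) ≤ b / a := (one_le_div ha0).mpr (by linarith)
  have h2 : b / a ≤ (b / a) ^ (2*α) := by
    have := Real.rpow_le_rpow_of_exponent_le hdiv hs
    simpa using this
  have hbeq : b ^ (2*α) = a ^ (2*α) * (b/a) ^ (2*α) := by
    rw [← Real.mul_rpow ha0.le (by positivity)]
    rw [mul_div_cancel₀ _ ha0.ne']
  have haeq : a ^ (2*α) = a ^ (2*α - 1) * a := by
    rw [← Real.rpow_add_one ha0.ne']
    congr 1; ring
  have h3 : a ^ (2*α - 1) * b ≤ b ^ (2*α) := by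
    rw [hbeq, haeq]
    have heq : a ^ (2*α - 1) * a * (b/a) = a ^ (2*α - 1) * b := by
      field_simp
    nlinarith [mul_le_mul_of_nonneg_left h2 (show (0:ℝ) ≤ a ^ (2*α-1) * a by positivity)]
  have h4 : a ^ (2*α) + a ^ (2*α - 1) * (b - a) ≤ b ^ (2*α) := by
    rw [haeq]; nlinarith
  nlinarith [mul_le_mul_of_nonneg_right h1 (show (0:ℝ) ≤ b - a by linarith)]

/-- Lattice point count near the characteristic surface: for `z_n = π(n - 1/2)` and
`α ∈ [1/2, 1]`, the set `Λ_{N₁,N₂,τ}` has cardinality at most `C·N₂`. -/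
theorem stmt_2 : ∃ C : ℝ, 0 < C ∧ ∀ (α : ℝ), 1/2 ≤ α → α ≤ 1 →
    ∀ (N₁ N₂ τ : ℕ), 1 ≤ N₂ → N₂ ≤ N₁ →
    ({p : ℕ × ℕ | N₁ ≤ p.1 ∧ p.1 < 2*N₁ ∧ N₂ ≤ p.2 ∧ p.2 < 2*N₂ ∧
      |(Real.pi*((p.1 : ℝ) - 1/2)) ^ (2*α) + (Real.pi*((p.2 : ℝ) - 1/2)) ^ (2*α) - (τ : ℝ)| ≤ 1/2}).ncard
      ≤ C * N₂ := by
  refine ⟨1, one_pos, fun α hα1 hα2 N₁ N₂ τ hN₂ hN ↦ ?_⟩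
  set S : Set (ℕ × ℕ) := {p : ℕ × ℕ | N₁ ≤ p.1 ∧ p.1 < 2*N₁ ∧ N₂ ≤ p.2 ∧ p.2 < 2*N₂ ∧
      |(Real.pi*((p.1 : ℝ) - 1/2)) ^ (2*α) + (Real.pi*((p.2 : ℝ) - 1/2)) ^ (2*α) - (τ : ℝ)| ≤ 1/2}
    with hS
  have hinj : Set.InjOn Prod.snd S := by
    intro p hp q hq hpq
    obtain ⟨hp1, _, _, _, hp5⟩ := hp
    obtain ⟨hq1, _, _, _, hq5⟩ := hq
    have h1m : 1 ≤ p.1 := le_trans (le_trans hN₂ hN) hp1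
    have h1q : 1 ≤ q.1 := le_trans (le_trans hN₂ hN) hq1
    rw [hpq] at hp5
    rw [abs_le] at hp5 hq5
    have heq1 : p.1 = q.1 := by
      rcases lt_trichotomy p.1 q.1 with h | h | h
      · exfalso
        have := gap_lemma α hα1 p.1 q.1 h1m h
        linarith [hp5.1, hp5.2, hq5.1, hq5.2]
      · exact h
      · exfalso
        have := gap_lemma α hα1 q.1 p.1 h1q h
        linarith [hp5.1, hp5.2, hq5.1, hq5.2]
    exact Prod.ext heq1 hpq
  have hsub : Prod.snd '' S ⊆ Set.Ico N₂ (2*N₂) := by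
    rintro x ⟨p, hp, rfl⟩
    exact ⟨hp.2.2.1, hp.2.2.2.1⟩
  have hcount : S.ncard ≤ N₂ := by
    have h1 : S.ncard = (Prod.snd '' S).ncard := (Set.ncard_image_of_injOn hinj).symm
    have h2 : (Prod.snd '' S).ncard ≤ (Set.Ico N₂ (2*N₂)).ncard :=
      Set.ncard_le_ncard hsub (Set.finite_Ico _ _)
    have h3 : (Set.Ico N₂ (2*N₂)).ncard = N₂ := by
      rw [← Finset.coe_Ico, Set.ncard_coe_finset, Nat.card_Ico]
      omega
    omega
  rw [one_mul]
  exact_mod_cast hcount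
end

section
/- Let b > 1/2 and n_0, n_1, n_2, n_3 be nonnegative reals and α > 0. Then sup_{τ ∈ ℝ} ( ∫∫∫_{τ_1 − τ_2 + τ_3 = τ} ⟨τ − n_0^{2α}⟩^{−2b} ⟨τ_1 − n_1^{2α}⟩^{−2b} ⟨τ_2 − n_2^{2α}⟩^{−2b} ⟨τ_3 − n_3^{2α}⟩^{−2b} dτ_1 dτ_2 )^{1/2} ≤ C ⟨n_0^{2α} − n_1^{2α} + n_2^{2α} − n_3^{2α}⟩^{−b}. -/
open MeasureTheory

/-! Integrating first in `τ₂` and then in `τ₁`, two applications of the convolution bound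
`∫ ⟨t - a⟩^(-s) ⟨t - c⟩^(-s) dt ≲ ⟨a - c⟩^(-s)` (for `s > 1`) reduce the double integral to
`⟨τ - m₀⟩^(-s) ⟨τ - m₁ + m₂ - m₃⟩^(-s)`, which Peetre's inequality `⟨u - v⟩ ≤ √2 ⟨u⟩ ⟨v⟩` bounds
by `⟨m₀ - m₁ + m₂ - m₃⟩^(-s)`. The convolution bound holds because at every `t` one of
`|t - a|`, `|t - c|` is at least `|a - c| / 2`, so the product is `≲ ⟨a - c⟩^(-s)` times
`⟨t - a⟩^(-s) + ⟨t - c⟩^(-s)`, whose integral is finite. -/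

/-- The Japanese bracket `⟨x⟩`. -/
noncomputable def jb (x : ℝ) : ℝ := Real.sqrt (1 + x^2)

lemma rpow_neg_le_mul_rpow_neg {x y c s : ℝ} (hx : 0 < x) (hc : 0 < c) (hs : 0 ≤ s)
    (h : x ≤ c * y) : y ^ (-s) ≤ c ^ s * x ^ (-s) :=
  calc y ^ (-s) ≤ (x / c) ^ (-s) :=
        Real.rpow_le_rpow_of_nonpos (div_pos hx hc) ((div_le_iff₀' hc).2 h) (neg_nonpos.2 hs)
    _ = c ^ s * x ^ (-s) := by
        rw [Real.div_rpow hx.le hc.le, Real.rpow_neg hc.le, div_inv_eq_mul, mul_comm]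

lemma jb_pos (x : ℝ) : 0 < jb x := Real.sqrt_pos.2 (by positivity)

lemma one_le_jb (x : ℝ) : 1 ≤ jb x :=
  Real.one_le_sqrt.2 (le_add_of_nonneg_right (sq_nonneg x))

lemma jb_neg (x : ℝ) : jb (-x) = jb x := by simp [jb]

lemma jb_rpow_nonneg (x s : ℝ) : 0 ≤ jb x ^ s := Real.rpow_nonneg (jb_pos x).le s

lemma jb_rpow_neg_le_one (x : ℝ) {s : ℝ} (hs : 0 ≤ s) : jb x ^ (-s) ≤ 1 :=
  Real.rpow_le_one_of_one_le_of_nonpos (one_le_jb x) (neg_nonpos.2 hs)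

lemma jb_le_two_mul {k u : ℝ} (h : |k| ≤ 2 * |u|) : jb k ≤ 2 * jb u := by
  have hsq : k ^ 2 ≤ 4 * u ^ 2 := by
    nlinarith [sq_abs k, sq_abs u, abs_nonneg k]
  rw [jb, Real.sqrt_le_iff]
  refine ⟨mul_nonneg zero_le_two (jb_pos u).le, ?_⟩
  rw [mul_pow, jb, Real.sq_sqrt (by positivity)]
  linarith

lemma jb_sub_le (u v : ℝ) : jb (u - v) ≤ Real.sqrt 2 * (jb u * jb v) := by
  rw [jb, jb, jb, ← Real.sqrt_mul (by positivity), ← Real.sqrt_mul (by norm_num)]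
  exact Real.sqrt_le_sqrt (by nlinarith [sq_nonneg (u + v), sq_nonneg (u * v)])

lemma jb_rpow_neg_mul_le {s : ℝ} (hs : 0 ≤ s) (u v : ℝ) :
    jb u ^ (-s) * jb v ^ (-s) ≤ Real.sqrt 2 ^ s * jb (u - v) ^ (-s) := by
  rw [← Real.mul_rpow (jb_pos u).le (jb_pos v).le]
  exact rpow_neg_le_mul_rpow_neg (jb_pos _) (by positivity) hs (jb_sub_le u v)

lemma continuous_jb : Continuous jb := by
  unfold jb; fun_prop

lemma integrable_jb_rpow_neg {s : ℝ} (hs : 1 < s) : Integrable fun t : ℝ => jb t ^ (-s) := by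
  have h : (fun t : ℝ => jb t ^ (-s)) = fun t : ℝ => (1 + ‖t‖ ^ 2) ^ (-s / 2) := by
    funext t
    rw [jb, Real.sqrt_eq_rpow, ← Real.rpow_mul (by positivity), Real.norm_eq_abs, sq_abs]
    ring_nf
  rw [h]
  exact integrable_rpow_neg_one_add_norm_sq (by simpa using hs)

lemma integral_jb_rpow_neg_pos {s : ℝ} (hs : 1 < s) : 0 < ∫ t : ℝ, jb t ^ (-s) := by
  rw [integral_pos_iff_support_of_nonneg (fun t => jb_rpow_nonneg t _)
    (integrable_jb_rpow_neg hs)]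
  simp [Function.support, (Real.rpow_pos_of_pos (jb_pos _) _).ne']

lemma integrable_jb_rpow_neg_mul {s : ℝ} (hs : 1 < s) (a c : ℝ) :
    Integrable fun t : ℝ => jb (t - a) ^ (-s) * jb (t - c) ^ (-s) := by
  refine ((integrable_jb_rpow_neg hs).comp_sub_right c).bdd_mul (c := 1)
    (((continuous_jb.comp (continuous_sub_right a)).rpow_const
      fun t => Or.inl (jb_pos _).ne').aestronglyMeasurable) (ae_of_all _ fun t => ?_)
  rw [Real.norm_of_nonneg (jb_rpow_nonneg _ _)]
  exact jb_rpow_neg_le_one _ (by linarith)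

lemma jb_rpow_neg_mul_le_add {s : ℝ} (hs : 0 ≤ s) (a c t : ℝ) :
    jb (t - a) ^ (-s) * jb (t - c) ^ (-s) ≤
      2 ^ s * jb (a - c) ^ (-s) * (jb (t - a) ^ (-s) + jb (t - c) ^ (-s)) := by
  have hfa := jb_rpow_nonneg (t - a) (-s)
  have hfc := jb_rpow_nonneg (t - c) (-s)
  have hM : 0 ≤ 2 ^ s * jb (a - c) ^ (-s) := by
    have := jb_rpow_nonneg (a - c) (-s); positivity
  have key : ∀ u, |a - c| ≤ 2 * |u| → jb u ^ (-s) ≤ 2 ^ s * jb (a - c) ^ (-s) := fun u hu =>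
    rpow_neg_le_mul_rpow_neg (jb_pos _) two_pos hs (jb_le_two_mul hu)
  rcases le_total (|a - c|) (2 * |t - a|) with h | h
  · nlinarith [key _ h]
  · have htri : |a - c| ≤ |t - a| + |t - c| := by
      simpa only [abs_sub_comm a t] using abs_sub_le a t c
    nlinarith [key (t - c) (by linarith)]

lemma exists_integral_jb_rpow_neg_mul_le {s : ℝ} (hs : 1 < s) :
    ∃ K > 0, ∀ a c : ℝ,
      ∫ t : ℝ, jb (t - a) ^ (-s) * jb (t - c) ^ (-s) ≤ K * jb (a - c) ^ (-s) := by
  set J := ∫ t : ℝ, jb t ^ (-s)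
  refine ⟨2 * J * 2 ^ s, by have := integral_jb_rpow_neg_pos hs; positivity, fun a c => ?_⟩
  have hfa := (integrable_jb_rpow_neg hs).comp_sub_right a
  have hfc := (integrable_jb_rpow_neg hs).comp_sub_right c
  calc ∫ t : ℝ, jb (t - a) ^ (-s) * jb (t - c) ^ (-s)
      ≤ ∫ t : ℝ, 2 ^ s * jb (a - c) ^ (-s) * (jb (t - a) ^ (-s) + jb (t - c) ^ (-s)) :=
        integral_mono_of_nonneg
          (ae_of_all _ fun t => mul_nonneg (jb_rpow_nonneg _ _) (jb_rpow_nonneg _ _))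
          ((hfa.add hfc).const_mul _)
          (ae_of_all _ (jb_rpow_neg_mul_le_add (by linarith) a c))
    _ = 2 * J * 2 ^ s * jb (a - c) ^ (-s) := by
        rw [integral_const_mul, integral_add hfa hfc,
          integral_sub_right_eq_self (fun t => jb t ^ (-s)) a,
          integral_sub_right_eq_self (fun t => jb t ^ (-s)) c]
        ring

lemma exists_integral_integral_jb_rpow_neg_le {s : ℝ} (hs : 1 < s) :
    ∃ C > 0, ∀ m₀ m₁ m₂ m₃ τ : ℝ,
      ∫ τ₁ : ℝ, ∫ τ₂ : ℝ,
          jb (τ - m₀) ^ (-s) * jb (τ₁ - m₁) ^ (-s) *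
          jb (τ₂ - m₂) ^ (-s) * jb ((τ - τ₁ + τ₂) - m₃) ^ (-s)
        ≤ C * jb (m₀ - m₁ + m₂ - m₃) ^ (-s) := by
  obtain ⟨K, hK, hconv⟩ := exists_integral_jb_rpow_neg_mul_le hs
  refine ⟨K * K * Real.sqrt 2 ^ s, by positivity, fun m₀ m₁ m₂ m₃ τ => ?_⟩
  set A := jb (τ - m₀) ^ (-s)
  have hA : 0 ≤ A := jb_rpow_nonneg _ _
  have inner : ∀ τ₁ : ℝ,
      ∫ τ₂ : ℝ, A * jb (τ₁ - m₁) ^ (-s) * jb (τ₂ - m₂) ^ (-s) * jb ((τ - τ₁ + τ₂) - m₃) ^ (-s)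
        ≤ A * K * (jb (τ₁ - m₁) ^ (-s) * jb (τ₁ - (τ + m₂ - m₃)) ^ (-s)) := by
    intro τ₁
    have h := hconv m₂ (m₃ - τ + τ₁)
    rw [show m₂ - (m₃ - τ + τ₁) = -(τ₁ - (τ + m₂ - m₃)) by ring, jb_neg] at h
    calc ∫ τ₂ : ℝ, A * jb (τ₁ - m₁) ^ (-s) * jb (τ₂ - m₂) ^ (-s) * jb ((τ - τ₁ + τ₂) - m₃) ^ (-s)
        = A * jb (τ₁ - m₁) ^ (-s) *
            ∫ τ₂ : ℝ, jb (τ₂ - m₂) ^ (-s) * jb (τ₂ - (m₃ - τ + τ₁)) ^ (-s) := by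
          rw [← integral_const_mul]
          congr 1 with τ₂
          rw [show τ - τ₁ + τ₂ - m₃ = τ₂ - (m₃ - τ + τ₁) by ring, mul_assoc]
      _ ≤ A * jb (τ₁ - m₁) ^ (-s) * (K * jb (τ₁ - (τ + m₂ - m₃)) ^ (-s)) :=
          mul_le_mul_of_nonneg_left h (mul_nonneg hA (jb_rpow_nonneg _ _))
      _ = A * K * (jb (τ₁ - m₁) ^ (-s) * jb (τ₁ - (τ + m₂ - m₃)) ^ (-s)) := by ring
  have outer := hconv m₁ (τ + m₂ - m₃)
  rw [show m₁ - (τ + m₂ - m₃) = -(τ - (m₁ - m₂ + m₃)) by ring, jb_neg] at outer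
  have peetre := jb_rpow_neg_mul_le (s := s) (by linarith) (τ - m₀) (τ - (m₁ - m₂ + m₃))
  rw [show τ - m₀ - (τ - (m₁ - m₂ + m₃)) = -(m₀ - m₁ + m₂ - m₃) by ring, jb_neg] at peetre
  calc _ ≤ ∫ τ₁ : ℝ, A * K * (jb (τ₁ - m₁) ^ (-s) * jb (τ₁ - (τ + m₂ - m₃)) ^ (-s)) :=
        integral_mono_of_nonneg
          (ae_of_all _ fun τ₁ => integral_nonneg fun τ₂ => by
            have := jb_rpow_nonneg (τ₁ - m₁) (-s)
            have := jb_rpow_nonneg (τ₂ - m₂) (-s)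
            have := jb_rpow_nonneg (τ - τ₁ + τ₂ - m₃) (-s)
            positivity)
          ((integrable_jb_rpow_neg_mul hs _ _).const_mul _) (ae_of_all _ inner)
    _ = K * A * ∫ τ₁ : ℝ, jb (τ₁ - m₁) ^ (-s) * jb (τ₁ - (τ + m₂ - m₃)) ^ (-s) := by
        rw [integral_const_mul, mul_comm A]
    _ ≤ K * A * (K * jb (τ - (m₁ - m₂ + m₃)) ^ (-s)) :=
        mul_le_mul_of_nonneg_left outer (by positivity)
    _ = K * K * (A * jb (τ - (m₁ - m₂ + m₃)) ^ (-s)) := by ring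
    _ ≤ K * K * (Real.sqrt 2 ^ s * jb (m₀ - m₁ + m₂ - m₃) ^ (-s)) :=
        mul_le_mul_of_nonneg_left peetre (by positivity)
    _ = K * K * Real.sqrt 2 ^ s * jb (m₀ - m₁ + m₂ - m₃) ^ (-s) := by ring

theorem stmt_4_general (b α : ℝ) (hb : 1/2 < b) :
    ∃ C : ℝ, 0 < C ∧ ∀ (n₀ n₁ n₂ n₃ : ℝ), 0 ≤ n₀ → 0 ≤ n₁ → 0 ≤ n₂ → 0 ≤ n₃ →
    ∀ τ : ℝ,
      (∫ τ₁ : ℝ, ∫ τ₂ : ℝ,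
          jb (τ - n₀ ^ (2*α)) ^ (-(2*b)) * jb (τ₁ - n₁ ^ (2*α)) ^ (-(2*b)) *
          jb (τ₂ - n₂ ^ (2*α)) ^ (-(2*b)) * jb ((τ - τ₁ + τ₂) - n₃ ^ (2*α)) ^ (-(2*b))) ^ (1/2 : ℝ)
        ≤ C * jb (n₀ ^ (2*α) - n₁ ^ (2*α) + n₂ ^ (2*α) - n₃ ^ (2*α)) ^ (-b) := by
  obtain ⟨C, hC, hI⟩ := exists_integral_integral_jb_rpow_neg_le (s := 2 * b) (by linarith)
  refine ⟨C ^ (1/2 : ℝ), Real.rpow_pos_of_pos hC _, fun n₀ n₁ n₂ n₃ _ _ _ _ τ => ?_⟩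
  set k := n₀ ^ (2*α) - n₁ ^ (2*α) + n₂ ^ (2*α) - n₃ ^ (2*α)
  calc _ ≤ (C * jb k ^ (-(2*b))) ^ (1/2 : ℝ) :=
        Real.rpow_le_rpow (integral_nonneg fun τ₁ => integral_nonneg fun τ₂ => by
            have := jb_rpow_nonneg (τ - n₀ ^ (2*α)) (-(2*b))
            have := jb_rpow_nonneg (τ₁ - n₁ ^ (2*α)) (-(2*b))
            have := jb_rpow_nonneg (τ₂ - n₂ ^ (2*α)) (-(2*b))
            have := jb_rpow_nonneg (τ - τ₁ + τ₂ - n₃ ^ (2*α)) (-(2*b))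
            positivity) (hI _ _ _ _ τ) (by norm_num)
    _ = C ^ (1/2 : ℝ) * jb k ^ (-b) := by
        rw [Real.mul_rpow hC.le (jb_rpow_nonneg _ _), ← Real.rpow_mul (jb_pos _).le]
        ring_nf

/-- Estimate of the term `A₂`: for `b > 1/2`, `α > 0` and nonnegative `n₀, n₁, n₂, n₃`, the
square root of the constrained triple integral is bounded by
`C ⟨n₀^{2α} − n₁^{2α} + n₂^{2α} − n₃^{2α}⟩^{−b}`. -/
theorem stmt_4 (b α : ℝ) (hb : 1/2 < b) (hα : 0 < α) :
    ∃ C : ℝ, 0 < C ∧ ∀ (n₀ n₁ n₂ n₃ : ℝ), 0 ≤ n₀ → 0 ≤ n₁ → 0 ≤ n₂ → 0 ≤ n₃ →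
    ∀ τ : ℝ,
      (∫ τ₁ : ℝ, ∫ τ₂ : ℝ,
          jb (τ - n₀ ^ (2*α)) ^ (-(2*b)) * jb (τ₁ - n₁ ^ (2*α)) ^ (-(2*b)) *
          jb (τ₂ - n₂ ^ (2*α)) ^ (-(2*b)) * jb ((τ - τ₁ + τ₂) - n₃ ^ (2*α)) ^ (-(2*b))) ^ (1/2 : ℝ)
        ≤ C * jb (n₀ ^ (2*α) - n₁ ^ (2*α) + n₂ ^ (2*α) - n₃ ^ (2*α)) ^ (-b) :=
  stmt_4_general b α hb
end
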